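/- arXiv:2506.14301 — 2 statements merged into one kernel-verified Lean document; each statement's English description precedes it below -/
import Mathlib

section
/- For r, s > 0 let T(r,s) = rD₁ + sD₂, where D₁, D₂ are anticommuting-square compatible self-adjoint operators on a Hilbert space with T(r,s)² = r²D₁² + s²D₂². Then ‖rD₁ · (T(r,s) ± i)⁻¹‖ ≤ 1. -/
/-- For self-adjoint `D₁`, `D₂` with `(rD₁ + sD₂)² = r²D₁² + s²D₂²` (anticommuting squares),
the resolvent `φ± = (rD₁ + sD₂ ± i)⁻¹` satisfies `‖rD₁ · φ±(rD₁ + sD₂)‖ ≤ 1`. -/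
theorem rD_resolvent_norm_bound
    {A : Type*} [NormedRing A] [StarRing A] [CStarRing A] [CompleteSpace A]
    [NormedAlgebra ℂ A] [StarModule ℂ A]
    (D₁ D₂ : A) (h₁ : IsSelfAdjoint D₁) (h₂ : IsSelfAdjoint D₂)
    (r s : ℝ) (hr : 0 < r) (hs : 0 < s)
    (hsq : (r • D₁ + s • D₂) ^ 2 = (r ^ 2) • D₁ ^ 2 + (s ^ 2) • D₂ ^ 2)
    (ε : ℂ) (hε : ε = Complex.I ∨ ε = -Complex.I)
    (φ : A) (hφl : φ * (r • D₁ + s • D₂ + ε • 1) = 1)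
    (hφr : (r • D₁ + s • D₂ + ε • 1) * φ = 1) :
    ‖(r • D₁) * φ‖ ≤ 1 := by
  letI : CStarAlgebra A :=
    { ‹NormedRing A›, ‹StarRing A›, ‹CompleteSpace A›, ‹CStarRing A›,
      ‹NormedAlgebra ℂ A›, ‹StarModule ℂ A› with }
  letI := CStarAlgebra.spectralOrder A
  letI := CStarAlgebra.spectralOrderedRing A
  set T : A := r • D₁ + s • D₂ with hT
  have hε2 : ε ^ 2 = -1 := by rcases hε with h | h <;> simp [h, sq, Complex.I_mul_I]
  have hεstar : star ε = -ε := by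
    rcases hε with h | h <;> simp [h, Complex.conj_I]
  have hTsa : IsSelfAdjoint T := by
    rw [hT]
    simp [IsSelfAdjoint, star_add, star_smul, h₁.star_eq, h₂.star_eq]
  have hstarφl : star φ * (T - ε • 1) = 1 := by
    have := congrArg star hφr
    simpa [star_mul, star_smul, hεstar, hTsa.star_eq, sub_eq_add_neg] using this
  have hstarφr : (T - ε • 1) * star φ = 1 := by
    have := congrArg star hφl
    simpa [star_mul, star_smul, hεstar, hTsa.star_eq, sub_eq_add_neg] using this
  -- key algebraic identity: (T - ε)(T + ε) = T² + 1
  have hfact : (T - ε • 1) * (T + ε • 1) = T ^ 2 + 1 := by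
    have : (T - ε • 1) * (T + ε • 1) = T ^ 2 - (ε ^ 2) • 1 := by
      simp only [sub_mul, mul_add, smul_add, smul_mul_assoc, mul_smul_comm, smul_smul, one_mul,
        mul_one, sq]
      module
    rw [this, hε2]
    simp
  have hkey : star φ * (T ^ 2 + 1) * φ = 1 := by
    calc star φ * (T ^ 2 + 1) * φ = (star φ * (T - ε • 1)) * ((T + ε • 1) * φ) := by
          rw [← hfact]; simp only [mul_assoc]
      _ = 1 := by rw [hstarφl, hφr, one_mul]
  have hdecomp : (1 : A) = star ((r • D₁) * φ) * ((r • D₁) * φ)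
      + (star ((s • D₂) * φ) * ((s • D₂) * φ) + star φ * φ) := by
    have e1 : star ((r • D₁) * φ) * ((r • D₁) * φ) = star φ * ((r ^ 2) • D₁ ^ 2) * φ := by
      rw [star_mul, star_smul, star_trivial r, h₁.star_eq]
      simp only [smul_mul_assoc, mul_smul_comm, smul_smul, sq, mul_assoc]
    have e2 : star ((s • D₂) * φ) * ((s • D₂) * φ) = star φ * ((s ^ 2) • D₂ ^ 2) * φ := by
      rw [star_mul, star_smul, star_trivial s, h₂.star_eq]
      simp only [smul_mul_assoc, mul_smul_comm, smul_smul, sq, mul_assoc]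
    rw [e1, e2, ← hkey, hsq]
    simp only [add_mul, mul_add, mul_one, one_mul]
    abel
  have hx0 : (0 : A) ≤ star ((r • D₁) * φ) * ((r • D₁) * φ) := star_mul_self_nonneg _
  have hle1 : star ((r • D₁) * φ) * ((r • D₁) * φ) ≤ 1 := by
    rw [hdecomp]
    have : (0 : A) ≤ star ((s • D₂) * φ) * ((s • D₂) * φ) + star φ * φ :=
      add_nonneg (star_mul_self_nonneg _) (star_mul_self_nonneg _)
    exact le_add_of_nonneg_right this
  have hnorm : ‖star ((r • D₁) * φ) * ((r • D₁) * φ)‖ ≤ 1 :=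
    (CStarAlgebra.norm_le_one_iff_of_nonneg _ hx0).mpr hle1
  rw [CStarRing.norm_star_mul_self] at hnorm
  nlinarith [norm_nonneg ((r • D₁) * φ)]
end

section
/- With the notation of the previous setting, for all r, r' > 0 and s > 0 the estimate ‖φ±(r'D₁ + sD₂) − φ±(rD₁ + sD₂)‖ ≤ |r − r'| / r holds, where φ±(t) = (t ± i)⁻¹. Consequently the map (r,s) ↦ φ±(rD₁ + sD₂) is continuous in operator norm on (0,∞)². -/
/-!
Write `R(T) = (T + t i)⁻¹` with `t = ±1`. For `T = rD₁ + sD₂` and `T' = r'D₁ + sD₂` the resolvent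
identity gives `R(T') - R(T) = R(T') (T - T') R(T) = ((r - r') / r) • R(T') (r D₁) R(T)`.
Here `‖R(T')‖ ≤ 1`, and anticommutation gives `(r D₁)² ≤ T²`, so that
`‖r D₁ R(T)‖ ≤ ‖T R(T)‖ = sup |x / (x + t i)| ≤ 1`. The same estimate in the variable `s` and the
triangle inequality give continuity.
-/

open Complex

theorem continuousAt_of_norm_sub_le {X E : Type*} [TopologicalSpace X]
    [SeminormedAddCommGroup E] {f : X → E} {g : X → ℝ} {p : X} (hg : ContinuousAt g p)
    (hgp : g p = 0) (hfg : ∀ q, ‖f q - f p‖ ≤ g q) : ContinuousAt f p := by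
  rw [ContinuousAt, ← tendsto_sub_nhds_zero_iff]
  exact squeeze_zero_norm hfg (hgp ▸ hg)

section StarOrdered

variable {A : Type*} [CStarAlgebra A] [PartialOrder A] [StarOrderedRing A]

theorem norm_mul_le_norm_mul_of_star_mul_self_le {B C : A} (h : star B * B ≤ star C * C)
    (x : A) : ‖B * x‖ ≤ ‖C * x‖ := by
  have hconj : ∀ D : A, star (D * x) * (D * x) = star x * (star D * D) * x := fun D => by
    rw [star_mul]; noncomm_ring
  have hsq : ‖star (B * x) * (B * x)‖ ≤ ‖star (C * x) * (C * x)‖ :=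
    CStarAlgebra.norm_le_norm_of_nonneg_of_le (star_mul_self_nonneg _) <| by
      rw [hconj, hconj]; exact star_left_conjugate_le_conjugate h x
  rw [CStarRing.norm_star_mul_self, CStarRing.norm_star_mul_self] at hsq
  exact (mul_self_le_mul_self_iff (norm_nonneg _) (norm_nonneg _)).2 hsq

theorem IsSelfAdjoint.star_mul_self_le_of_sq_add_eq {X Y : A} (hX : IsSelfAdjoint X)
    (hY : IsSelfAdjoint Y) (h : (X + Y) ^ 2 = X ^ 2 + Y ^ 2) :
    star X * X ≤ star (X + Y) * (X + Y) := by
  rw [hX.star_eq, (hX.add hY).star_eq, ← sq, ← sq, h]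
  exact le_add_of_nonneg_right hY.sq_nonneg

end StarOrdered

section Resolvent

variable {A : Type*} [CStarAlgebra A] {t : ℝ} {T : A}

theorem ofReal_add_mul_I_ne_zero (x : ℝ) (ht : t ≠ 0) : (x : ℂ) + t * I ≠ 0 :=
  fun h => ht (by simpa using congrArg im h)

theorem norm_inv_ofReal_add_mul_I_le (x : ℝ) (ht : t ≠ 0) : ‖((x : ℂ) + t * I)⁻¹‖ ≤ |t|⁻¹ := by
  rw [norm_inv]
  refine inv_anti₀ (abs_pos.2 ht) ?_
  simpa using abs_im_le_norm ((x : ℂ) + t * I)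

theorem norm_ofReal_mul_inv_add_mul_I_le_one (x t : ℝ) : ‖(x : ℂ) * ((x : ℂ) + t * I)⁻¹‖ ≤ 1 := by
  rw [norm_mul, norm_inv, ← div_eq_mul_inv]
  refine div_le_one_of_le₀ ?_ (norm_nonneg _)
  simpa using abs_re_le_norm ((x : ℂ) + t * I)

theorem continuousOn_inv_add_mul_I (ht : t ≠ 0) (hT : IsSelfAdjoint T) :
    ContinuousOn (fun z : ℂ => (z + t * I)⁻¹) (spectrum ℂ T) := by
  intro z hz
  obtain ⟨x, rfl⟩ : ∃ x : ℝ, z = x := ⟨z.re, hT.mem_spectrum_eq_re hz⟩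
  exact (continuousAt_id.add continuousAt_const).inv₀
    (ofReal_add_mul_I_ne_zero x ht) |>.continuousWithinAt

theorem cfc_add_mul_I (T : A) (hT : IsStarNormal T := by cfc_tac) :
    cfc (fun z : ℂ => z + t * I) T = T + algebraMap ℂ A (t * I) := by
  rw [cfc_add_const (t * I) (fun z => z) T, cfc_id' ℂ T]

theorem cfc_inv_add_mul_I_mul (ht : t ≠ 0) (hT : IsSelfAdjoint T) :
    cfc (fun z : ℂ => (z + t * I)⁻¹) T * (T + algebraMap ℂ A (t * I)) = 1 := by
  have hcont := continuousOn_inv_add_mul_I ht hT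
  rw [← cfc_add_mul_I T, ← cfc_mul _ _ T, ← cfc_one ℂ T]
  refine cfc_congr fun z hz => ?_
  obtain ⟨x, rfl⟩ : ∃ x : ℝ, z = x := ⟨z.re, hT.mem_spectrum_eq_re hz⟩
  exact inv_mul_cancel₀ (ofReal_add_mul_I_ne_zero x ht)

theorem mul_cfc_inv_add_mul_I (ht : t ≠ 0) (hT : IsSelfAdjoint T) :
    (T + algebraMap ℂ A (t * I)) * cfc (fun z : ℂ => (z + t * I)⁻¹) T = 1 := by
  have hcont := continuousOn_inv_add_mul_I ht hT
  rw [← cfc_add_mul_I T, ← cfc_mul _ _ T, ← cfc_one ℂ T]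
  refine cfc_congr fun z hz => ?_
  obtain ⟨x, rfl⟩ : ∃ x : ℝ, z = x := ⟨z.re, hT.mem_spectrum_eq_re hz⟩
  exact mul_inv_cancel₀ (ofReal_add_mul_I_ne_zero x ht)

theorem cfc_inv_add_mul_I_sub_cfc_inv_add_mul_I (ht : t ≠ 0) {T' : A} (hT : IsSelfAdjoint T)
    (hT' : IsSelfAdjoint T') :
    cfc (fun z : ℂ => (z + t * I)⁻¹) T' - cfc (fun z : ℂ => (z + t * I)⁻¹) T =
      cfc (fun z : ℂ => (z + t * I)⁻¹) T' * (T - T') * cfc (fun z : ℂ => (z + t * I)⁻¹) T := by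
  set R := cfc (fun z : ℂ => (z + t * I)⁻¹) T
  set R' := cfc (fun z : ℂ => (z + t * I)⁻¹) T'
  have hR : (T + algebraMap ℂ A (t * I)) * R = 1 := mul_cfc_inv_add_mul_I ht hT
  have hR' : R' * (T' + algebraMap ℂ A (t * I)) = 1 := cfc_inv_add_mul_I_mul ht hT'
  calc R' - R
      = R' * ((T + algebraMap ℂ A (t * I)) * R) - R' * (T' + algebraMap ℂ A (t * I)) * R := by
        rw [hR, hR', mul_one, one_mul]
    _ = R' * (T - T') * R := by noncomm_ring

theorem norm_cfc_inv_add_mul_I_le (ht : t ≠ 0) (hT : IsSelfAdjoint T) :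
    ‖cfc (fun z : ℂ => (z + t * I)⁻¹) T‖ ≤ |t|⁻¹ := by
  refine norm_cfc_le (by positivity) fun z hz => ?_
  obtain ⟨x, rfl⟩ : ∃ x : ℝ, z = x := ⟨z.re, hT.mem_spectrum_eq_re hz⟩
  exact norm_inv_ofReal_add_mul_I_le x ht

theorem norm_mul_cfc_inv_add_mul_I_le_one (ht : t ≠ 0) (hT : IsSelfAdjoint T) :
    ‖T * cfc (fun z : ℂ => (z + t * I)⁻¹) T‖ ≤ 1 := by
  have hcont := continuousOn_inv_add_mul_I ht hT
  have hmul :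
      T * cfc (fun z : ℂ => (z + t * I)⁻¹) T = cfc (fun z : ℂ => z * (z + t * I)⁻¹) T := by
    rw [cfc_mul (fun z => z) _ T, cfc_id' ℂ T]
  rw [hmul]
  refine norm_cfc_le zero_le_one fun z hz => ?_
  obtain ⟨x, rfl⟩ : ∃ x : ℝ, z = x := ⟨z.re, hT.mem_spectrum_eq_re hz⟩
  exact norm_ofReal_mul_inv_add_mul_I_le_one x t

theorem norm_cfc_inv_add_mul_I_sub_le [PartialOrder A] [StarOrderedRing A] (ht : t ≠ 0)
    {T' B : A} {a : ℝ} (hT : IsSelfAdjoint T) (hT' : IsSelfAdjoint T')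
    (hB : star B * B ≤ star T * T) (hTT' : T - T' = a • B) :
    ‖cfc (fun z : ℂ => (z + t * I)⁻¹) T' - cfc (fun z : ℂ => (z + t * I)⁻¹) T‖ ≤ |a| * |t|⁻¹ := by
  set R := cfc (fun z : ℂ => (z + t * I)⁻¹) T
  set R' := cfc (fun z : ℂ => (z + t * I)⁻¹) T'
  have hBR : ‖B * R‖ ≤ 1 :=
    (norm_mul_le_norm_mul_of_star_mul_self_le hB R).trans
      (norm_mul_cfc_inv_add_mul_I_le_one ht hT)
  calc ‖R' - R‖ = ‖R' * (a • (B * R))‖ := by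
        rw [cfc_inv_add_mul_I_sub_cfc_inv_add_mul_I ht hT hT', hTT', mul_smul_comm,
          smul_mul_assoc, mul_smul_comm, mul_assoc]
    _ ≤ ‖R'‖ * (|a| * ‖B * R‖) := by
        rw [← Real.norm_eq_abs, ← norm_smul]; exact norm_mul_le _ _
    _ ≤ |t|⁻¹ * (|a| * 1) := by
        gcongr
        exact norm_cfc_inv_add_mul_I_le ht hT'
    _ = |a| * |t|⁻¹ := by ring

end Resolvent

section GradedAnticommuting

variable {A : Type*} [CStarAlgebra A] [PartialOrder A] [StarOrderedRing A] {t : ℝ} {D₁ D₂ : A}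

theorem norm_cfc_inv_add_mul_I_smul_add_smul_sub_le_left (ht : t ≠ 0) (h₁ : IsSelfAdjoint D₁)
    (h₂ : IsSelfAdjoint D₂) {r s : ℝ}
    (hsq : (r • D₁ + s • D₂) ^ 2 = r ^ 2 • D₁ ^ 2 + s ^ 2 • D₂ ^ 2)
    (hr : 0 < r) (r' : ℝ) :
    ‖cfc (fun z : ℂ => (z + t * I)⁻¹) (r' • D₁ + s • D₂)
      - cfc (fun z : ℂ => (z + t * I)⁻¹) (r • D₁ + s • D₂)‖ ≤ |r - r'| / r * |t|⁻¹ := by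
  have hr₁ := (IsSelfAdjoint.all r).smul h₁
  have hs₂ := (IsSelfAdjoint.all s).smul h₂
  have hB := hr₁.star_mul_self_le_of_sq_add_eq hs₂ (by rw [hsq, smul_pow, smul_pow])
  have hTT' : r • D₁ + s • D₂ - (r' • D₁ + s • D₂) = ((r - r') / r) • r • D₁ := by
    rw [smul_smul, div_mul_cancel₀ _ hr.ne', sub_smul]; abel
  simpa [abs_div, abs_of_pos hr] using norm_cfc_inv_add_mul_I_sub_le ht (hr₁.add hs₂)
    (((IsSelfAdjoint.all r').smul h₁).add hs₂) hB hTT'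

theorem norm_cfc_inv_add_mul_I_smul_add_smul_sub_le_right (ht : t ≠ 0) (h₁ : IsSelfAdjoint D₁)
    (h₂ : IsSelfAdjoint D₂) {r s : ℝ}
    (hsq : (r • D₁ + s • D₂) ^ 2 = r ^ 2 • D₁ ^ 2 + s ^ 2 • D₂ ^ 2)
    (hs : 0 < s) (s' : ℝ) :
    ‖cfc (fun z : ℂ => (z + t * I)⁻¹) (r • D₁ + s' • D₂)
      - cfc (fun z : ℂ => (z + t * I)⁻¹) (r • D₁ + s • D₂)‖ ≤ |s - s'| / s * |t|⁻¹ := by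
  have hr₁ := (IsSelfAdjoint.all r).smul h₁
  have hs₂ := (IsSelfAdjoint.all s).smul h₂
  have hB := hs₂.star_mul_self_le_of_sq_add_eq hr₁
    (by rw [add_comm, hsq, smul_pow, smul_pow, add_comm])
  have hTT' : s • D₂ + r • D₁ - (s' • D₂ + r • D₁) = ((s - s') / s) • s • D₂ := by
    rw [smul_smul, div_mul_cancel₀ _ hs.ne', sub_smul]; abel
  simpa [abs_div, abs_of_pos hs, add_comm] using norm_cfc_inv_add_mul_I_sub_le ht (hs₂.add hr₁)
    (((IsSelfAdjoint.all s').smul h₂).add hr₁) hB hTT'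

end GradedAnticommuting

/-- For self-adjoint `D₁`, `D₂` which graded-anticommute, so that
`(rD₁ + sD₂)² = r²D₁² + s²D₂²`, the resolvents `φ±(rD₁ + sD₂)` with `φ±(t) = (t ± i)⁻¹`
satisfy `‖φ±(r'D₁ + sD₂) − φ±(rD₁ + sD₂)‖ ≤ |r − r'| / r` for `r, r', s > 0`; consequently
`(r,s) ↦ φ±(rD₁ + sD₂)` is continuous in operator norm on `(0,∞)²`. -/
theorem resolvent_difference_estimate_and_continuity
    {A : Type*} [CStarAlgebra A]
    (D₁ D₂ : A) (h₁ : IsSelfAdjoint D₁) (h₂ : IsSelfAdjoint D₂)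
    (hsq : ∀ r s : ℝ, (r • D₁ + s • D₂) ^ 2 = (r ^ 2) • D₁ ^ 2 + (s ^ 2) • D₂ ^ 2)
    (φ : ℂ → ℂ)
    (hφ : (∀ z, φ z = (z + Complex.I)⁻¹) ∨ (∀ z, φ z = (z - Complex.I)⁻¹)) :
    (∀ r r' s : ℝ, 0 < r → 0 < r' → 0 < s →
      ‖cfc φ (r' • D₁ + s • D₂) - cfc φ (r • D₁ + s • D₂)‖ ≤ |r - r'| / r) ∧
    ContinuousOn (fun p : ℝ × ℝ => cfc φ (p.1 • D₁ + p.2 • D₂))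
      (Set.Ioi (0 : ℝ) ×ˢ Set.Ioi (0 : ℝ)) := by
  obtain ⟨t, ht, rfl⟩ : ∃ t : ℝ, |t| = 1 ∧ φ = fun z => (z + t * I)⁻¹ := by
    rcases hφ with h | h
    · exact ⟨1, abs_one, funext fun z => by simp [h]⟩
    · exact ⟨-1, by simp, funext fun z => by simp [h, sub_eq_add_neg]⟩
  have ht₀ : t ≠ 0 := by rintro rfl; simp at ht
  let _ : PartialOrder A := CStarAlgebra.spectralOrder A
  have _ : StarOrderedRing A := CStarAlgebra.spectralOrderedRing A
  refine ⟨fun r r' s hr _ _ => by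
    simpa [ht] using
      norm_cfc_inv_add_mul_I_smul_add_smul_sub_le_left ht₀ h₁ h₂ (hsq r s) hr r', ?_⟩
  rintro ⟨r, s⟩ ⟨hr, hs⟩
  refine ContinuousAt.continuousWithinAt <| continuousAt_of_norm_sub_le
    (g := fun q => |r - q.1| / r + |s - q.2| / s) (by fun_prop) (by simp) fun ⟨r', s'⟩ => ?_
  calc _ ≤ ‖cfc (fun z : ℂ => (z + t * I)⁻¹) (r' • D₁ + s' • D₂)
          - cfc (fun z : ℂ => (z + t * I)⁻¹) (r • D₁ + s' • D₂)‖
        + ‖cfc (fun z : ℂ => (z + t * I)⁻¹) (r • D₁ + s' • D₂)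
          - cfc (fun z : ℂ => (z + t * I)⁻¹) (r • D₁ + s • D₂)‖ :=
        norm_sub_le_norm_sub_add_norm_sub _ _ _
    _ ≤ _ := by
        simpa [ht] using add_le_add
          (norm_cfc_inv_add_mul_I_smul_add_smul_sub_le_left ht₀ h₁ h₂ (hsq r s') hr r')
          (norm_cfc_inv_add_mul_I_smul_add_smul_sub_le_right ht₀ h₁ h₂ (hsq r s) hs s')
end
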